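/- arXiv:2010.10414 — 2 statements merged into one kernel-verified Lean document; each statement's English description precedes it below -/
import Mathlib

section
/- Let m and n be nonzero integers with |m| ≠ |n| and let BS(m,n) = ⟨x, t ∣ t⁻¹ xᵐ t = xⁿ⟩. If N is a normal subgroup of BS(m,n) that is not contained in the normal closure of x, then there exists a positive integer q such that x^q ∈ N. -/
/-- The single defining relator of the Baumslag–Solitar group `BS(m,n)`:
`t⁻¹ xᵐ t (xⁿ)⁻¹`, where `x` and `t` are the two generators. -/
def bsRel (m n : ℤ) : Set (FreeGroup Bool) :=
  {(FreeGroup.of false)⁻¹ * (FreeGroup.of true) ^ m * FreeGroup.of false *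
    ((FreeGroup.of true) ^ n)⁻¹}

/-- The Baumslag–Solitar group `BS(m,n) = ⟨x, t ∣ t⁻¹ xᵐ t = xⁿ⟩`. -/
abbrev BS (m n : ℤ) : Type := PresentedGroup (bsRel m n)

/-- The generator `x` of `BS(m,n)`. -/
def BS.x (m n : ℤ) : BS m n := PresentedGroup.of true

/-- The generator `t` of `BS(m,n)`. -/
def BS.t (m n : ℤ) : BS m n := PresentedGroup.of false

/-!
An element `g` of a group *scales the powers of `x` by `r ∈ ℚˣ`* if it conjugates some nonzero
power `xᵘ` to `xᵛ` with `v = r u`. The elements scaling powers of `x` by `ρ g`, for a homomorphism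
`ρ : G →* ℚˣ`, form a subgroup. In `BS(m,n)` the generator `x` scales by `1` and `t` by `n / m`,
so every element scales powers of `x` by its image under the modular homomorphism
`BS(m,n) → ℚˣ`, `x ↦ 1`, `t ↦ n / m`.

If `g ∈ N` scales by `r ≠ 1`, then `g⁻¹ (xᵘ g x⁻ᵘ) = x^(v - u)` is a nontrivial power of `x`
lying in `N`. Modulo the normal closure of `x` every element is a power `tᵏ`, with modular image
`(n / m)ᵏ`; as `|n / m| ≠ 1`, an element outside the normal closure has modular image `≠ 1`.
-/

open Subgroup

section ScalesZPowers

variable {G : Type*} [Group G]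

def ScalesZPowers (x g : G) (r : ℚˣ) : Prop :=
  ∃ u v : ℤ, u ≠ 0 ∧ g⁻¹ * x ^ u * g = x ^ v ∧ (v : ℚ) = r * u

lemma inv_mul_zpow_mul (g y : G) (k : ℤ) : g⁻¹ * y ^ k * g = (g⁻¹ * y * g) ^ k := by
  simpa using (conj_zpow (a := g⁻¹) (b := y) (i := k)).symm

lemma ScalesZPowers.one (x : G) : ScalesZPowers x 1 1 :=
  ⟨1, 1, one_ne_zero, by simp, by simp⟩

lemma ScalesZPowers.mul {x a b : G} {r s : ℚˣ} (ha : ScalesZPowers x a r)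
    (hb : ScalesZPowers x b s) : ScalesZPowers x (a * b) (r * s) := by
  obtain ⟨u, v, hu, hav, hr⟩ := ha
  obtain ⟨u', v', hu', hbv, hs⟩ := hb
  refine ⟨u * u', v' * v, mul_ne_zero hu hu', ?_, ?_⟩
  · calc (a * b)⁻¹ * x ^ (u * u') * (a * b)
        = b⁻¹ * (a⁻¹ * x ^ u * a) ^ u' * b := by
          rw [← inv_mul_zpow_mul, ← zpow_mul]; group
      _ = (b⁻¹ * x ^ u' * b) ^ v := by
          rw [hav, ← zpow_mul, mul_comm v u', zpow_mul, inv_mul_zpow_mul]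
      _ = x ^ (v' * v) := by rw [hbv, zpow_mul]
  · push_cast
    rw [hr, hs]
    ring

lemma ScalesZPowers.inv {x g : G} {r : ℚˣ} (h : ScalesZPowers x g r) :
    ScalesZPowers x g⁻¹ r⁻¹ := by
  obtain ⟨u, v, hu, hv, hr⟩ := h
  have hv0 : v ≠ 0 := by
    rintro rfl
    exact hu (by simpa using hr.symm)
  refine ⟨v, u, hv0, ?_, ?_⟩
  · rw [← hv]; group
  · rw [hr, ← mul_assoc, Units.inv_mul, one_mul]

def scalingSubgroup (x : G) (ρ : G →* ℚˣ) : Subgroup G where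
  carrier := {g | ScalesZPowers x g (ρ g)}
  one_mem' := by simpa using ScalesZPowers.one x
  mul_mem' ha hb := by simpa using ha.mul hb
  inv_mem' h := by simpa using h.inv

lemma exists_zpow_mem_of_scalesZPowers {N : Subgroup G} (hN : N.Normal) {x g : G} {r : ℚˣ}
    (hg : g ∈ N) (hscale : ScalesZPowers x g r) (hr : r ≠ 1) :
    ∃ k : ℤ, k ≠ 0 ∧ x ^ k ∈ N := by
  obtain ⟨u, v, hu, hv, hvu⟩ := hscale
  refine ⟨v - u, ?_, ?_⟩
  · intro hvu'
    apply hr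
    have : (r : ℚ) * u = u := by rw [← hvu, sub_eq_zero.1 hvu']
    exact Units.val_eq_one.1 ((mul_eq_right₀ (Int.cast_ne_zero.2 hu)).1 this)
  · have : g⁻¹ * (x ^ u * g * (x ^ u)⁻¹) ∈ N := N.mul_mem (N.inv_mem hg) (hN.conj_mem g hg _)
    rwa [← mul_assoc, ← mul_assoc, hv, ← zpow_neg, ← zpow_add, ← sub_eq_add_neg] at this

lemma exists_pow_mem_of_zpow_mem {N : Subgroup G} {x : G} {k : ℤ} (hk : k ≠ 0)
    (hx : x ^ k ∈ N) : ∃ q : ℕ, 0 < q ∧ x ^ q ∈ N := by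
  refine ⟨k.natAbs, Int.natAbs_pos.2 hk, ?_⟩
  rcases Int.natAbs_eq k with h | h
  · rwa [← zpow_natCast, ← h]
  · rwa [← zpow_natCast, ← N.inv_mem_iff, ← zpow_neg, ← h]

end ScalesZPowers

namespace BS

variable {m n : ℤ}

lemma t_inv_mul_x_zpow_mul_t : (t m n)⁻¹ * x m n ^ m * t m n = x m n ^ n := by
  have h := PresentedGroup.one_of_mem (rels := bsRel m n) rfl
  simp only [map_mul, map_inv, map_zpow] at h
  exact mul_inv_eq_one.1 h

def modularHom (hm : m ≠ 0) (hn : n ≠ 0) : BS m n →* ℚˣ :=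
  PresentedGroup.toGroup
    (f := fun b => if b then 1 else
      Units.mk0 ((n : ℚ) / m) (div_ne_zero (Int.cast_ne_zero.2 hn) (Int.cast_ne_zero.2 hm)))
    (by rintro r rfl; simp)

@[simp] lemma modularHom_x (hm : m ≠ 0) (hn : n ≠ 0) : modularHom hm hn (x m n) = 1 := by
  simp [modularHom, x]

@[simp] lemma val_modularHom_t (hm : m ≠ 0) (hn : n ≠ 0) :
    (modularHom hm hn (t m n) : ℚ) = n / m := by
  simp [modularHom, t]

lemma scalesZPowers_modularHom (hm : m ≠ 0) (hn : n ≠ 0) (g : BS m n) :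
    ScalesZPowers (x m n) g (modularHom hm hn g) := by
  change g ∈ scalingSubgroup (x m n) (modularHom hm hn)
  refine PresentedGroup.generated_by _ _ (fun b => ?_) g
  cases b
  · refine ⟨m, n, hm, t_inv_mul_x_zpow_mul_t, ?_⟩
    change (n : ℚ) = (modularHom hm hn (t m n) : ℚ) * m
    rw [val_modularHom_t]
    field_simp
  · change ScalesZPowers (x m n) (x m n) (modularHom hm hn (x m n))
    rw [modularHom_x]
    exact ⟨1, 1, one_ne_zero, by group, by simp⟩

lemma exists_zpow_t_inv_mul_mem_normalClosure (g : BS m n) :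
    ∃ k : ℤ, (t m n ^ k)⁻¹ * g ∈ normalClosure {x m n} := by
  have hg : g ∈ zpowers (t m n) ⊔ normalClosure {x m n} := by
    refine PresentedGroup.generated_by _ _ (fun b => ?_) g
    cases b
    · exact mem_sup_left (mem_zpowers _)
    · exact mem_sup_right (subset_normalClosure rfl)
  rw [← SetLike.mem_coe, mul_normal, Set.mem_mul] at hg
  obtain ⟨_, ⟨k, rfl⟩, _, hh, rfl⟩ := hg
  exact ⟨k, by simpa using hh⟩

lemma ker_modularHom_le_normalClosure (hm : m ≠ 0) (hn : n ≠ 0) (hmn : |m| ≠ |n|) :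
    (modularHom hm hn).ker ≤ normalClosure {x m n} := by
  intro g hg
  obtain ⟨k, hk⟩ := exists_zpow_t_inv_mul_mem_normalClosure g
  have hker : normalClosure {x m n} ≤ (modularHom hm hn).ker :=
    normalClosure_le_normal (by simp)
  have hpow : ((n : ℚ) / m) ^ k = 1 := by
    have h1 := MonoidHom.mem_ker.1 (hker hk)
    rw [map_mul, MonoidHom.mem_ker.1 hg, mul_one, map_inv, inv_eq_one, map_zpow] at h1
    simpa using congrArg Units.val h1
  have hratio : |(n : ℚ) / m| ≠ 1 := by
    rw [abs_div, Ne, div_eq_one_iff_eq (by simp [hm])]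
    exact_mod_cast hmn.symm
  have hk0 : k = 0 :=
    (zpow_eq_one_iff_right₀ (abs_nonneg _) hratio).1 (by rw [← abs_zpow, hpow, abs_one])
  simpa [hk0] using hk

end BS

theorem power_of_x_mem_of_not_le_normalClosure
    (m n : ℤ) (hm : m ≠ 0) (hn : n ≠ 0) (hmn : |m| ≠ |n|)
    (N : Subgroup (BS m n)) (hN : N.Normal)
    (h : ¬ N ≤ Subgroup.normalClosure ({BS.x m n} : Set (BS m n))) :
    ∃ q : ℕ, 0 < q ∧ (BS.x m n) ^ q ∈ N := by
  obtain ⟨g, hgN, hg⟩ := SetLike.not_le_iff_exists.mp h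
  have hρ : BS.modularHom hm hn g ≠ 1 := fun h1 =>
    hg (BS.ker_modularHom_le_normalClosure hm hn hmn h1)
  obtain ⟨k, hk, hxk⟩ :=
    exists_zpow_mem_of_scalesZPowers hN hgN (BS.scalesZPowers_modularHom hm hn g) hρ
  exact exists_pow_mem_of_zpow_mem hk hxk
end

section
/- Let m and n be nonzero coprime integers with |m| ≠ |n| and let BS(m,n) = ⟨x, t ∣ t⁻¹ xᵐ t = xⁿ⟩. Let N be a normal subgroup of BS(m,n), and suppose there exist finitely many elements a₁, …, a_s of BS(m,n) such that every element g of BS(m,n) can be written as g = n₀ t^p a_j x^k for some n₀ ∈ N, integers p and k, and some j ∈ {1, …, s}. Then there exists a positive integer q such that x^q ∈ N; in particular, the quotient BS(m,n)/N is virtually cyclic. -/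
/-!
Pass to `Q = BS(m,n) ⧸ N` and let `x` act on `Q ⧸ ⟨t⟩`, which by the hypothesis is a finite union
of `⟨x⟩`-orbits. Call a point aperiodic if its `⟨x⟩`-orbit is infinite. Such an orbit splits into
exactly `|w|` orbits of `⟨x ^ w⟩`, and since `t⁻¹` conjugates `x ^ m` to `x ^ n`, it carries the
`⟨x ^ m⟩`-orbits of aperiodic points injectively to `⟨x ^ n⟩`-orbits of aperiodic points, and
symmetrically for `t`. So `c * |m| = c * |n|` for the finite number `c` of aperiodic `⟨x⟩`-orbits,
whence `c = 0`. In particular `x ^ d ∈ ⟨t⟩` for some `d ≠ 0`; then `x ^ (m * d)` commutes with `t`,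
so `x ^ (m * d) = t⁻¹ x ^ (m * d) t = x ^ (n * d)` and `x` has finite order. All `⟨x⟩`-orbits on
`Q ⧸ ⟨t⟩` are then finite, so `⟨t⟩` has finite index.
-/

open MulAction Subgroup

namespace MulAction

variable {G Ω : Type*} [Group G] [MulAction G Ω] {u v : G} {m n : ℤ}

def IsAperiodicPt (u : G) (ω : Ω) : Prop := ∀ k : ℤ, u ^ k • ω = ω → k = 0

theorem IsAperiodicPt.eq_of_zpow_smul_eq {ω : Ω} (h : IsAperiodicPt u ω) {i j : ℤ}
    (hij : u ^ i • ω = u ^ j • ω) : i = j := by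
  refine sub_eq_zero.mp (h _ ?_)
  rw [sub_eq_neg_add, zpow_add, mul_smul, hij, ← mul_smul, ← zpow_add, neg_add_cancel,
    zpow_zero, one_smul]

theorem isAperiodicPt_zpow_smul_iff {ω : Ω} (k : ℤ) :
    IsAperiodicPt u (u ^ k • ω) ↔ IsAperiodicPt u ω := by
  refine forall_congr' fun j => ?_
  rw [smul_smul, ((Commute.refl u).zpow_zpow j k).eq, mul_smul, smul_left_cancel_iff]

theorem smul_zpow_mul_smul_of_conj (hrel : v * u ^ m * v⁻¹ = u ^ n) (j : ℤ) (ω : Ω) :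
    v • u ^ (m * j) • ω = u ^ (n * j) • v • ω := by
  rw [smul_smul, smul_smul, zpow_mul, zpow_mul, ← hrel, conj_zpow, inv_mul_cancel_right]

theorem IsAperiodicPt.smul_of_conj (hrel : v * u ^ m * v⁻¹ = u ^ n) (hm : m ≠ 0) {ω : Ω}
    (h : IsAperiodicPt u ω) : IsAperiodicPt u (v • ω) := by
  intro k hk
  have hfix : u ^ (n * k) • v • ω = v • ω :=
    smul_eq_self_of_mem_zpowers (by rw [mul_comm, zpow_mul]; exact zpow_mem_zpowers _ _) hk
  rw [← smul_zpow_mul_smul_of_conj hrel, smul_left_cancel_iff] at hfix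
  simpa [hm] using h _ hfix

variable (u) in
theorem exists_zpow_smul_out_mk (ω : Ω) :
    ∃ k : ℤ, u ^ k • (⟦ω⟧ : orbitRel.Quotient (zpowers u) Ω).out = ω := by
  obtain ⟨⟨g, hg⟩, hgω⟩ :=
    mem_orbit_iff.mp (mem_orbit_symm.mp (Quotient.mk_out (s := orbitRel (zpowers u) Ω) ω))
  obtain ⟨k, rfl⟩ := mem_zpowers_iff.mp hg
  exact ⟨k, hgω⟩

theorem mk_zpow_smul (k : ℤ) (ω : Ω) :
    (⟦u ^ k • ω⟧ : orbitRel.Quotient (zpowers u) Ω) = ⟦ω⟧ :=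
  Quotient.sound (s := orbitRel (zpowers u) Ω)
    (mem_orbit ω (⟨u ^ k, zpow_mem_zpowers u k⟩ : zpowers u))

theorem isAperiodicPt_out_mk_iff {ω : Ω} :
    IsAperiodicPt u (⟦ω⟧ : orbitRel.Quotient (zpowers u) Ω).out ↔ IsAperiodicPt u ω := by
  obtain ⟨k, hk⟩ := exists_zpow_smul_out_mk u ω
  conv_rhs => rw [← hk]
  exact (isAperiodicPt_zpow_smul_iff k).symm

variable (u) in
noncomputable def orbitExponent (ω : Ω) : ℤ := (exists_zpow_smul_out_mk u ω).choose

theorem zpow_orbitExponent_smul_out_mk (ω : Ω) :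
    u ^ orbitExponent u ω • (⟦ω⟧ : orbitRel.Quotient (zpowers u) Ω).out = ω :=
  (exists_zpow_smul_out_mk u ω).choose_spec

theorem exists_zpow_mul_smul_eq_of_orbitExponent {w : ℤ} {ω ω' : Ω}
    (h : (⟦ω⟧ : orbitRel.Quotient (zpowers u) Ω) = ⟦ω'⟧)
    (he : (orbitExponent u ω : ZMod w.natAbs) = orbitExponent u ω') :
    ∃ l : ℤ, u ^ (w * l) • ω = ω' := by
  obtain ⟨l, hl⟩ := Int.natAbs_dvd.mp ((ZMod.intCast_eq_intCast_iff_dvd_sub _ _ _).mp he)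
  refine ⟨l, ?_⟩
  rw [← zpow_orbitExponent_smul_out_mk (u := u) ω, ← zpow_orbitExponent_smul_out_mk (u := u) ω',
    ← h, smul_smul, ← zpow_add, ← hl, sub_add_cancel]

variable (Ω u) in
abbrev AperiodicOrbits : Type _ :=
  {o : orbitRel.Quotient (zpowers u) Ω // IsAperiodicPt u o.out}

theorem AperiodicOrbits.eq_of_zpow_smul_out_eq {o o' : AperiodicOrbits Ω u} {i j : ℤ}
    (h : u ^ i • o.1.out = u ^ j • o'.1.out) : o = o' ∧ i = j := by
  have hoo' : o = o' := by
    refine Subtype.ext ?_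
    rw [← Quotient.out_eq o.1, ← Quotient.out_eq o'.1, ← mk_zpow_smul i o.1.out, h, mk_zpow_smul]
  subst hoo'
  exact ⟨rfl, o.2.eq_of_zpow_smul_eq h⟩

/-- `(o, a)` stands for the `⟨u ^ m⟩`-orbit of `u ^ a • o.out`, and its image for the
`⟨u ^ n⟩`-orbit of `v • u ^ a • o.out`. -/
noncomputable def AperiodicOrbits.conjMap (hrel : v * u ^ m * v⁻¹ = u ^ n) (hm : m ≠ 0)
    (p : AperiodicOrbits Ω u × ZMod m.natAbs) : AperiodicOrbits Ω u × ZMod n.natAbs :=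
  let y := v • u ^ (p.2.val : ℤ) • p.1.1.out
  (⟨⟦y⟧, isAperiodicPt_out_mk_iff.mpr
    ((isAperiodicPt_zpow_smul_iff _).mpr p.1.2 |>.smul_of_conj hrel hm)⟩, orbitExponent u y)

theorem AperiodicOrbits.conjMap_injective (hrel : v * u ^ m * v⁻¹ = u ^ n) (hm : m ≠ 0) :
    Function.Injective (conjMap (Ω := Ω) hrel hm) := by
  rintro ⟨o, a⟩ ⟨o', a'⟩ h
  dsimp only [conjMap] at h
  rw [Prod.mk.injEq, Subtype.mk.injEq] at h
  obtain ⟨l, hl⟩ := exists_zpow_mul_smul_eq_of_orbitExponent h.1 h.2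
  rw [← smul_zpow_mul_smul_of_conj hrel, smul_left_cancel_iff, smul_smul, ← zpow_add] at hl
  obtain ⟨rfl, hexp⟩ := eq_of_zpow_smul_out_eq hl
  refine Prod.ext rfl ?_
  have hcast : ((a.val : ℤ) : ZMod m.natAbs) = ((a'.val : ℤ) : ZMod m.natAbs) :=
    (ZMod.intCast_eq_intCast_iff_dvd_sub _ _ _).mpr (Int.natAbs_dvd.mpr ⟨l, by omega⟩)
  have : NeZero m.natAbs := ⟨Int.natAbs_ne_zero.mpr hm⟩
  simpa [ZMod.natCast_zmod_val] using hcast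

theorem card_aperiodicOrbits_mul_le (hrel : v * u ^ m * v⁻¹ = u ^ n) (hm : m ≠ 0) (hn : n ≠ 0)
    [Finite (orbitRel.Quotient (zpowers u) Ω)] :
    Nat.card (AperiodicOrbits Ω u) * m.natAbs ≤ Nat.card (AperiodicOrbits Ω u) * n.natAbs := by
  have : NeZero n.natAbs := ⟨Int.natAbs_ne_zero.mpr hn⟩
  simpa only [Nat.card_prod, Nat.card_zmod] using
    Nat.card_le_card_of_injective _ (AperiodicOrbits.conjMap_injective (Ω := Ω) hrel hm)

theorem not_isAperiodicPt_of_conj (hrel : v * u ^ m * v⁻¹ = u ^ n) (hm : m ≠ 0) (hn : n ≠ 0)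
    (hmn : m.natAbs ≠ n.natAbs) [Finite (orbitRel.Quotient (zpowers u) Ω)] (ω : Ω) :
    ¬IsAperiodicPt u ω := by
  intro hω
  have : Nonempty (AperiodicOrbits Ω u) := ⟨⟨⟦ω⟧, isAperiodicPt_out_mk_iff.mpr hω⟩⟩
  have hrel' : v⁻¹ * u ^ n * v⁻¹⁻¹ = u ^ m := by rw [← hrel]; group
  exact hmn <| Nat.eq_of_mul_eq_mul_left Nat.card_pos <|
    (card_aperiodicOrbits_mul_le (Ω := Ω) hrel hm hn).antisymm
      (card_aperiodicOrbits_mul_le hrel' hn hm)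

theorem finite_orbitRel_quotient_zpowers_of_cover {s : ℕ} (b : Fin s → Ω)
    (hcover : ∀ ω : Ω, ∃ (j : Fin s) (k : ℤ), u ^ k • b j = ω) :
    Finite (orbitRel.Quotient (zpowers u) Ω) := by
  refine Finite.of_surjective (fun j => ⟦b j⟧) (Quotient.ind fun ω => ?_)
  obtain ⟨j, k, rfl⟩ := hcover ω
  exact ⟨j, (mk_zpow_smul k (b j)).symm⟩

theorem finite_of_isOfFinOrder [Finite (orbitRel.Quotient (zpowers u) Ω)]
    (hu : IsOfFinOrder u) : Finite Ω := by
  have : Finite (zpowers u) := (finite_zpowers.mpr hu).to_subtype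
  refine Finite.of_surjective
    (fun p : zpowers u × orbitRel.Quotient (zpowers u) Ω => p.1 • p.2.out) fun ω => ?_
  obtain ⟨k, hk⟩ := exists_zpow_smul_out_mk u ω
  exact ⟨(⟨u ^ k, zpow_mem_zpowers u k⟩, ⟦ω⟧), hk⟩

end MulAction

theorem isOfFinOrder_of_conj_of_zpow_mem_zpowers {Q : Type*} [Group Q] {x t : Q} {m n : ℤ}
    (hrel : t⁻¹ * x ^ m * t = x ^ n) (hmn : m ≠ n) {d : ℤ} (hd : d ≠ 0)
    (hxd : x ^ d ∈ zpowers t) : IsOfFinOrder x := by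
  obtain ⟨e, he⟩ := mem_zpowers_iff.mp hxd
  have hcomm : t⁻¹ * x ^ (m * d) * t = x ^ (m * d) := by
    rw [mul_comm, zpow_mul, ← he, ← zpow_mul]; group
  have hconj : t⁻¹ * x ^ (m * d) * t = x ^ (n * d) := by
    have h := conj_zpow (a := t⁻¹) (b := x ^ m) (i := d)
    rw [inv_inv, hrel, ← zpow_mul, ← zpow_mul] at h
    exact h.symm
  refine isOfFinOrder_iff_zpow_eq_one.mpr ⟨(m - n) * d, mul_ne_zero (sub_ne_zero.mpr hmn) hd, ?_⟩
  rw [sub_mul, zpow_sub, ← hconj, hcomm, mul_inv_cancel]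

theorem isOfFinOrder_and_finiteIndex_of_doubleCoset_cover {Q : Type*} [Group Q] {x t : Q}
    {m n : ℤ} (hm : m ≠ 0) (hn : n ≠ 0) (hmn : |m| ≠ |n|) (hrel : t⁻¹ * x ^ m * t = x ^ n)
    {s : ℕ} (a : Fin s → Q)
    (hcover : ∀ g : Q, ∃ (p k : ℤ) (j : Fin s), g = t ^ p * a j * x ^ k) :
    IsOfFinOrder x ∧ (zpowers t).FiniteIndex := by
  -- inverting `g = t ^ p * a j * x ^ k` turns the double cosets into `⟨x⟩`-orbits on `Q ⧸ ⟨t⟩`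
  have hcover' : ∀ ω : Q ⧸ zpowers t, ∃ (j : Fin s) (k : ℤ),
      x ^ k • (((a j)⁻¹ : Q) : Q ⧸ zpowers t) = ω := by
    refine fun ω => QuotientGroup.induction_on ω fun g => ?_
    obtain ⟨p, k, j, hg⟩ := hcover g⁻¹
    refine ⟨j, -k, ?_⟩
    rw [MulAction.Quotient.smul_mk, smul_eq_mul, QuotientGroup.eq, inv_eq_iff_eq_inv.mp hg]
    simp [mul_assoc]
  have := finite_orbitRel_quotient_zpowers_of_cover _ hcover'
  have hmn' : m.natAbs ≠ n.natAbs := by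
    rwa [← Int.natCast_natAbs, ← Int.natCast_natAbs, Ne, Nat.cast_inj] at hmn
  have hperiodic := not_isAperiodicPt_of_conj (u := x) (v := t⁻¹) (by rwa [inv_inv]) hm hn hmn'
    ((1 : Q) : Q ⧸ zpowers t)
  simp only [IsAperiodicPt, not_forall] at hperiodic
  obtain ⟨d, hxd, hd⟩ := hperiodic
  have hx := isOfFinOrder_of_conj_of_zpow_mem_zpowers hrel (ne_of_apply_ne abs hmn) hd
    (by simpa [MulAction.Quotient.smul_mk, QuotientGroup.eq] using hxd)
  have := finite_of_isOfFinOrder (Ω := Q ⧸ zpowers t) hx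
  exact ⟨hx, finiteIndex_of_finite_quotient⟩

theorem BS.t_inv_mul_x_zpow_mul_t_s8 (m n : ℤ) :
    (BS.t m n)⁻¹ * BS.x m n ^ m * BS.t m n = BS.x m n ^ n := by
  have h := PresentedGroup.mk_eq_mk_of_mul_inv_mem (rels := bsRel m n) (Set.mem_singleton _)
  simp only [map_mul, map_inv, map_zpow] at h
  exact h

theorem power_of_x_mem_and_virtually_cyclic_of_coset_decomposition_general
    (m n : ℤ) (hm : m ≠ 0) (hn : n ≠ 0) (hmn : |m| ≠ |n|)
    (N : Subgroup (BS m n)) [N.Normal]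
    (s : ℕ) (a : Fin s → BS m n)
    (hcover : ∀ g : BS m n, ∃ n₀ ∈ N, ∃ (p k : ℤ) (j : Fin s),
      g = n₀ * (BS.t m n) ^ p * a j * (BS.x m n) ^ k) :
    (∃ q : ℕ, 0 < q ∧ (BS.x m n) ^ q ∈ N) ∧
    ∃ C : Subgroup (BS m n ⧸ N), IsCyclic C ∧ C.FiniteIndex := by
  let π := QuotientGroup.mk' N
  obtain ⟨hx, hT⟩ := isOfFinOrder_and_finiteIndex_of_doubleCoset_cover (x := π (BS.x m n))
    (t := π (BS.t m n)) hm hn hmn (by simpa using congrArg π (BS.t_inv_mul_x_zpow_mul_t_s8 m n))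
    (π ∘ a) fun g => by
      obtain ⟨g, rfl⟩ := QuotientGroup.mk'_surjective N g
      obtain ⟨n₀, hn₀, p, k, j, rfl⟩ := hcover g
      exact ⟨p, k, j, by simp [π, (QuotientGroup.eq_one_iff n₀).mpr hn₀]⟩
  refine ⟨⟨orderOf (π (BS.x m n)), hx.orderOf_pos, ?_⟩, zpowers (π (BS.t m n)), inferInstance, hT⟩
  rw [← QuotientGroup.eq_one_iff, QuotientGroup.mk_pow]
  exact pow_orderOf_eq_one _

theorem power_of_x_mem_and_virtually_cyclic_of_coset_decomposition
    (m n : ℤ) (hm : m ≠ 0) (hn : n ≠ 0) (hco : IsCoprime m n) (hmn : |m| ≠ |n|)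
    (N : Subgroup (BS m n)) [N.Normal]
    (s : ℕ) (a : Fin s → BS m n)
    (hcover : ∀ g : BS m n, ∃ n₀ ∈ N, ∃ (p k : ℤ) (j : Fin s),
      g = n₀ * (BS.t m n) ^ p * a j * (BS.x m n) ^ k) :
    (∃ q : ℕ, 0 < q ∧ (BS.x m n) ^ q ∈ N) ∧
    ∃ C : Subgroup (BS m n ⧸ N), IsCyclic C ∧ C.FiniteIndex :=
  power_of_x_mem_and_virtually_cyclic_of_coset_decomposition_general m n hm hn hmn N s a hcover
end
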